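/- Assume the bipartite Bloch data of the context and that ρ is separable. Then for every positive integer l and all real numbers x, y, the block matrix S = [[x·y·E_{l×l}, x·𝟙_l·(T^{(B)})^T], [y·T^{(A)}·𝟙_l^T, T^{(AB)}]], where E_{l×l} is the l×l all-ones matrix and 𝟙_l ∈ ℝ^l is the all-ones column vector, satisfies ‖S‖_tr ≤ √( (l·x² + (d_A²−d_A)/κ_A)·(l·y² + (d_B²−d_B)/κ_B) ); in particular this recovers Shen–Li–Duan's bound when κ_A = κ_B = 2 and Chang–Cui–Zhang–Fei's bound when κ_A = d_A and κ_B = d_B. -/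

import Mathlib

open Matrix ComplexOrder
open scoped Kronecker

/-- The trace norm `‖A‖_tr = Tr((A†A)^{1/2})` of a complex matrix (the sum of its
singular values). -/
noncomputable def traceNorm {m n : Type*} [Fintype m] [Fintype n] [DecidableEq n]
    (A : Matrix m n ℂ) : ℝ :=
  (((Matrix.posSemidef_conjTranspose_mul_self A).1.eigenvectorUnitary : Matrix n n ℂ) *
    Matrix.diagonal (((↑) : ℝ → ℂ) ∘ Real.sqrt ∘ (Matrix.posSemidef_conjTranspose_mul_self A).1.eigenvalues) *
    (star (Matrix.posSemidef_conjTranspose_mul_self A).1.eigenvectorUnitary : Matrix n n ℂ)).trace.re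

/-!
Write `ρ = ∑ₖ wₖ σₖ ⊗ τₖ` with pure `σₖ, τₖ`, and let `aₖ, bₖ` be their local Bloch vectors.
Pairing both expressions of `ρ` with
`Gᵢᴴ ⊗ 1`, `1 ⊗ Gⱼᴴ` and `Gᵢᴴ ⊗ Gⱼᴴ` shows that `T^{(A)}`, `T^{(B)}`, `T^{(AB)}` are the
`w`-averages of `aₖ`, `bₖ`, `aₖ bₖᵀ`, so the block matrix is `∑ₖ wₖ uₖ vₖᵀ` with
`uₖ = (x 𝟙, aₖ)` and `vₖ = (y 𝟙, bₖ)`. The trace norm is `Re tr (Wᴴ S)` for a contraction `W`,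
hence at most `∑ₖ wₖ ‖uₖ‖ ‖vₖ‖`; finally Bessel's inequality bounds `‖aₖ‖²` by
`(d_A² - d_A) / κ_A` because `σₖ` is pure.
-/

open scoped MatrixOrder

section TraceNorm
variable {m n : Type*} [Fintype m] [Fintype n] [DecidableEq n]

theorem traceNorm_eq_re_trace_cfc_sqrt (A : Matrix m n ℂ) :
    traceNorm A = (cfc Real.sqrt (Aᴴ * A)).trace.re := by
  rw [(posSemidef_conjTranspose_mul_self A).1.cfc_eq, IsHermitian.cfc,
    Unitary.conjStarAlgAut_apply]
  rfl

/- The polar part `W = A (AᴴA)^{-1/2}`; since `(√0)⁻¹ = 0`, the inverse square root is the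
pseudo-inverse one and `WᴴW` is the projection onto the support of `AᴴA`. -/
theorem exists_conjTranspose_mul_self_le_one_and_re_trace_eq_traceNorm (A : Matrix m n ℂ) :
    ∃ W : Matrix m n ℂ, Wᴴ * W ≤ 1 ∧ (Wᴴ * A).trace.re = traceNorm A := by
  set P := Aᴴ * A
  have hP : IsSelfAdjoint P := (posSemidef_conjTranspose_mul_self A).1
  have hcont (f : ℝ → ℝ) : ContinuousOn f (spectrum ℝ P) := P.finite_real_spectrum.continuousOn f
  set K := cfc (fun t => (√t)⁻¹) P
  have hK : Kᴴ = K := IsSelfAdjoint.cfc.star_eq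
  have hKP : K * P = cfc Real.sqrt P := by
    conv_lhs => rw [← cfc_id' ℝ P hP]
    rw [← cfc_mul _ _ _ (hcont _) (hcont _)]
    congr 1
    funext t
    rw [inv_mul_eq_div, Real.div_sqrt]
  refine ⟨A * K, ?_, ?_⟩
  · calc (A * K)ᴴ * (A * K) = K * P * K := by
          simp only [conjTranspose_mul, hK, P, Matrix.mul_assoc]
      _ = cfc (fun t => √t * (√t)⁻¹) P := by
          rw [hKP, cfc_mul _ _ _ (hcont _) (hcont _)]
      _ ≤ 1 := cfc_le_one _ _ fun t _ => mul_inv_le_one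
  · rw [traceNorm_eq_re_trace_cfc_sqrt, conjTranspose_mul, hK, Matrix.mul_assoc, hKP]

theorem norm_mulVec_le_of_conjTranspose_mul_self_le_one {W : Matrix m n ℂ} (hW : Wᴴ * W ≤ 1)
    (z : n → ℂ) : ‖WithLp.toLp 2 (W *ᵥ z)‖ ≤ ‖WithLp.toLp 2 z‖ := by
  have h := (Matrix.le_iff.mp hW).re_dotProduct_nonneg z
  rw [sub_mulVec, dotProduct_sub, one_mulVec, ← mulVec_mulVec, dotProduct_mulVec, ← star_mulVec,
    map_sub] at h
  rw [← sq_le_sq₀ (norm_nonneg _) (norm_nonneg _), ← inner_self_eq_norm_sq (𝕜 := ℂ),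
    ← inner_self_eq_norm_sq (𝕜 := ℂ), EuclideanSpace.inner_toLp_toLp,
    EuclideanSpace.inner_toLp_toLp, dotProduct_comm, dotProduct_comm z]
  linarith

theorem re_trace_conjTranspose_mul_vecMulVec_le {W : Matrix m n ℂ} (hW : Wᴴ * W ≤ 1)
    (u : m → ℂ) (v : n → ℂ) :
    (Wᴴ * vecMulVec u v).trace.re ≤ ‖WithLp.toLp 2 u‖ * ‖WithLp.toLp 2 v‖ := by
  have htr : (Wᴴ * vecMulVec u v).trace
      = inner ℂ (WithLp.toLp 2 (W *ᵥ star v)) (WithLp.toLp 2 u) := by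
    rw [EuclideanSpace.inner_toLp_toLp]
    simp only [trace, diag_apply, Matrix.mul_apply, conjTranspose_apply, vecMulVec_apply, mulVec,
      dotProduct, Pi.star_apply, star_sum, star_mul', star_star, Finset.mul_sum]
    rw [Finset.sum_comm]
    exact Finset.sum_congr rfl fun _ _ => Finset.sum_congr rfl fun _ _ => by ring
  have hv : ‖WithLp.toLp 2 (star v)‖ = ‖WithLp.toLp 2 v‖ := by
    simp [EuclideanSpace.norm_eq]
  calc (Wᴴ * vecMulVec u v).trace.re ≤ ‖(Wᴴ * vecMulVec u v).trace‖ := Complex.re_le_norm _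
    _ ≤ ‖WithLp.toLp 2 (W *ᵥ star v)‖ * ‖WithLp.toLp 2 u‖ := htr ▸ norm_inner_le_norm _ _
    _ ≤ ‖WithLp.toLp 2 v‖ * ‖WithLp.toLp 2 u‖ := by
        gcongr
        exact hv ▸ norm_mulVec_le_of_conjTranspose_mul_self_le_one hW _
    _ = _ := mul_comm _ _

theorem traceNorm_sum_smul_vecMulVec_le {K : Type*} [Fintype K] {w : K → ℝ} (hw : ∀ k, 0 ≤ w k)
    (u : K → m → ℂ) (v : K → n → ℂ) :
    traceNorm (∑ k, (w k : ℂ) • vecMulVec (u k) (v k))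
      ≤ ∑ k, w k * (‖WithLp.toLp 2 (u k)‖ * ‖WithLp.toLp 2 (v k)‖) := by
  obtain ⟨W, hW, hWtr⟩ :=
    exists_conjTranspose_mul_self_le_one_and_re_trace_eq_traceNorm
      (∑ k, (w k : ℂ) • vecMulVec (u k) (v k))
  rw [← hWtr, Matrix.mul_sum, trace_sum, Complex.re_sum]
  refine Finset.sum_le_sum fun k _ => ?_
  rw [Matrix.mul_smul, trace_smul, smul_eq_mul, Complex.re_ofReal_mul]
  exact mul_le_mul_of_nonneg_left (re_trace_conjTranspose_mul_vecMulVec_le hW _ _) (hw k)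

end TraceNorm

section BlockMatrix
variable {L ι ι' K : Type*} [Fintype K]

theorem fromBlocks_eq_sum_smul_vecMulVec {w : K → ℂ} (hw : ∑ k, w k = 1) {a : K → ι → ℂ}
    {b : K → ι' → ℂ} {TA : ι → ℂ} {TB : ι' → ℂ} {TAB : Matrix ι ι' ℂ}
    (hTA : ∀ i, ∑ k, w k * a k i = TA i) (hTB : ∀ j, ∑ k, w k * b k j = TB j)
    (hTAB : ∀ i j, ∑ k, w k * (a k i * b k j) = TAB i j) (x y : ℂ) :
    fromBlocks (of fun (_ _ : L) => x * y) (of fun _ j => x * TB j) (of fun i _ => y * TA i) TAB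
      = ∑ k, w k • vecMulVec (Sum.elim (fun _ => x) (a k)) (Sum.elim (fun _ => y) (b k)) := by
  ext (p | i) (q | j) <;>
    simp only [fromBlocks_apply₁₁, fromBlocks_apply₁₂, fromBlocks_apply₂₁, fromBlocks_apply₂₂,
      of_apply, Matrix.sum_apply, Matrix.smul_apply, vecMulVec_apply, Sum.elim_inl, Sum.elim_inr,
      smul_eq_mul]
  · rw [← Finset.sum_mul, hw, one_mul]
  · rw [← hTB, Finset.mul_sum]; exact Finset.sum_congr rfl fun _ _ => by ring
  · rw [← hTA, Finset.mul_sum]; exact Finset.sum_congr rfl fun _ _ => by ring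
  · rw [← hTAB]

theorem norm_toLp_sumElim_const_sq [Fintype L] [Fintype ι] (x : ℝ) (a : ι → ℂ) :
    ‖WithLp.toLp 2 (Sum.elim (fun _ : L => (x : ℂ)) a)‖ ^ 2
      = Fintype.card L * x ^ 2 + ‖WithLp.toLp 2 a‖ ^ 2 := by
  simp [EuclideanSpace.norm_sq_eq, Fintype.sum_sum_type]

end BlockMatrix

section LocalBlochVector
variable {n ι : Type*} [Fintype n] [DecidableEq n] [Fintype ι] [DecidableEq ι]

/- Normalised so that `σ = (1 + ∑ᵢ blochVec κ G σ i • G i) / d` when `G` is a complete traceless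
orthogonal family. -/
noncomputable def blochVec (κ : ℝ) (G : ι → Matrix n n ℂ) (σ : Matrix n n ℂ) (i : ι) : ℂ :=
  ((Fintype.card n / κ : ℝ) : ℂ) * ((G i)ᴴ * σ).trace

/- Bessel's inequality in the Hilbert–Schmidt inner product, for the orthonormal family
`Gᵢ / √κ` and the vector `d σ - 1`: as `Gᵢ` is traceless its coefficients are `d tr (Gᵢᴴ σ)`,
and as `σ` is pure its squared norm is `d² - d`. -/
theorem norm_blochVec_sq_le {κ : ℝ} (hκ : 0 < κ) {G : ι → Matrix n n ℂ}
    (htr : ∀ i, (G i).trace = 0)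
    (horth : ∀ i j, ((G i)ᴴ * G j).trace = if i = j then (κ : ℂ) else 0)
    {σ : Matrix n n ℂ} (hσ : σ.IsHermitian) (hσtr : σ.trace = 1) (hσσ : σ * σ = σ) :
    ‖WithLp.toLp 2 (blochVec κ G σ)‖ ^ 2 ≤ ((Fintype.card n : ℝ) ^ 2 - Fintype.card n) / κ := by
  let := toMatrixSeminormedAddCommGroup (1 : Matrix n n ℂ) PosSemidef.one
  let := toMatrixInnerProductSpace (1 : Matrix n n ℂ) PosSemidef.one
  have hinner (X Y : Matrix n n ℂ) : inner ℂ X Y = (Xᴴ * Y).trace := by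
    change (Y * 1 * Xᴴ).trace = _
    rw [Matrix.mul_one, trace_mul_comm]
  set d : ℝ := (Fintype.card n : ℝ) with hd
  have hd0 : 0 ≤ d := Nat.cast_nonneg _
  have hon : Orthonormal ℂ fun i => ((√κ : ℝ) : ℂ)⁻¹ • G i := by
    rw [orthonormal_iff_ite]
    intro i j
    rw [hinner, conjTranspose_smul, smul_mul_smul_comm, trace_smul, horth]
    split_ifs
    · have : ((√κ : ℝ) : ℂ) ≠ 0 := Complex.ofReal_ne_zero.mpr (Real.sqrt_pos.mpr hκ).ne'
      have hκ' : ((√κ : ℝ) : ℂ) ^ 2 = κ := by rw [← Complex.ofReal_pow, Real.sq_sqrt hκ.le]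
      simp only [RCLike.star_def, map_inv₀, Complex.conj_ofReal, smul_eq_mul, ← hκ']
      field_simp
    · simp
  have hcoef (i : ι) : ‖inner ℂ (((√κ : ℝ) : ℂ)⁻¹ • G i) ((d : ℂ) • σ - 1)‖ ^ 2
      = κ * ‖blochVec κ G σ i‖ ^ 2 := by
    rw [inner_smul_left, hinner, Matrix.mul_sub, Matrix.mul_smul, Matrix.mul_one, trace_sub,
      trace_smul, trace_conjTranspose, htr, star_zero, sub_zero, blochVec]
    simp only [smul_eq_mul, norm_mul, norm_inv, RCLike.norm_conj, Complex.norm_real,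
      Real.norm_eq_abs, ← hd, abs_of_nonneg (Real.sqrt_nonneg _), abs_of_nonneg hd0,
      abs_of_nonneg (div_nonneg hd0 hκ.le)]
    rw [mul_pow, inv_pow, Real.sq_sqrt hκ.le]
    field_simp
  have hnorm : ‖(d : ℂ) • σ - 1‖ ^ 2 = d ^ 2 - d := by
    rw [← inner_self_eq_norm_sq (𝕜 := ℂ), hinner]
    simp [Matrix.sub_mul, Matrix.mul_sub, hσ.eq, hσσ, hσtr, trace_sub, trace_smul]
    ring
  have bessel := hon.sum_inner_products_le ((d : ℂ) • σ - 1) (s := Finset.univ)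
  simp only [hcoef, ← Finset.mul_sum, hnorm] at bessel
  rw [EuclideanSpace.norm_sq_eq, le_div_iff₀ hκ]
  linarith

theorem norm_toLp_sumElim_const_blochVec_le {L : Type*} [Fintype L] (x : ℝ) {κ : ℝ} (hκ : 0 < κ)
    {G : ι → Matrix n n ℂ} (htr : ∀ i, (G i).trace = 0)
    (horth : ∀ i j, ((G i)ᴴ * G j).trace = if i = j then (κ : ℂ) else 0)
    {σ : Matrix n n ℂ} (hσ : σ.IsHermitian) (hσtr : σ.trace = 1) (hσσ : σ * σ = σ) :
    ‖WithLp.toLp 2 (Sum.elim (fun _ : L => (x : ℂ)) (blochVec κ G σ))‖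
      ≤ √(Fintype.card L * x ^ 2 + ((Fintype.card n : ℝ) ^ 2 - Fintype.card n) / κ) := by
  refine Real.le_sqrt_of_sq_le ?_
  rw [norm_toLp_sumElim_const_sq]
  gcongr
  exact norm_blochVec_sq_le hκ htr horth hσ hσtr hσσ

end LocalBlochVector

section BlochRepresentation
variable {m n ι ι' : Type*} [Fintype m] [Fintype n] [DecidableEq m] [DecidableEq n]
  [Fintype ι] [Fintype ι'] (GA : ι → Matrix m m ℂ) (GB : ι' → Matrix n n ℂ) (TA : ι → ℂ)
  (TB : ι' → ℂ) (TAB : Matrix ι ι' ℂ)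

def blochSum : Matrix (m × n) (m × n) ℂ :=
  (1 : Matrix m m ℂ) ⊗ₖ (1 : Matrix n n ℂ)
    + ∑ i, TA i • (GA i ⊗ₖ (1 : Matrix n n ℂ))
    + ∑ j, TB j • ((1 : Matrix m m ℂ) ⊗ₖ GB j)
    + ∑ i, ∑ j, TAB i j • (GA i ⊗ₖ GB j)

theorem trace_kronecker_mul_blochSum (X : Matrix m m ℂ) (Y : Matrix n n ℂ) :
    ((X ⊗ₖ Y) * blochSum GA GB TA TB TAB).trace
      = X.trace * Y.trace
        + ∑ i, TA i * ((X * GA i).trace * Y.trace)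
        + ∑ j, TB j * (X.trace * (Y * GB j).trace)
        + ∑ i, ∑ j, TAB i j * ((X * GA i).trace * (Y * GB j).trace) := by
  simp only [blochSum, Matrix.mul_add, trace_add, Matrix.mul_sum, trace_sum, Matrix.mul_smul,
    trace_smul, smul_eq_mul, ← mul_kronecker_mul, trace_kronecker, Matrix.mul_one]

variable {κA κB : ℝ} {GA GB}

theorem trace_conjTranspose_kronecker_one_mul_blochSum [DecidableEq ι]
    (hGAtr : ∀ i, (GA i).trace = 0)
    (hGAorth : ∀ i i', ((GA i)ᴴ * GA i').trace = if i = i' then (κA : ℂ) else 0)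
    (hGBtr : ∀ j, (GB j).trace = 0) (i : ι) :
    (((GA i)ᴴ ⊗ₖ (1 : Matrix n n ℂ)) * blochSum GA GB TA TB TAB).trace
      = κA * Fintype.card n * TA i := by
  simp [trace_kronecker_mul_blochSum, trace_conjTranspose, hGAtr, hGBtr, hGAorth]
  ring

theorem trace_one_kronecker_conjTranspose_mul_blochSum [DecidableEq ι']
    (hGAtr : ∀ i, (GA i).trace = 0) (hGBtr : ∀ j, (GB j).trace = 0)
    (hGBorth : ∀ j j', ((GB j)ᴴ * GB j').trace = if j = j' then (κB : ℂ) else 0) (j : ι') :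
    (((1 : Matrix m m ℂ) ⊗ₖ (GB j)ᴴ) * blochSum GA GB TA TB TAB).trace
      = Fintype.card m * κB * TB j := by
  simp [trace_kronecker_mul_blochSum, trace_conjTranspose, hGAtr, hGBtr, hGBorth]
  ring

theorem trace_conjTranspose_kronecker_conjTranspose_mul_blochSum [DecidableEq ι] [DecidableEq ι']
    (hGAtr : ∀ i, (GA i).trace = 0)
    (hGAorth : ∀ i i', ((GA i)ᴴ * GA i').trace = if i = i' then (κA : ℂ) else 0)
    (hGBtr : ∀ j, (GB j).trace = 0)
    (hGBorth : ∀ j j', ((GB j)ᴴ * GB j').trace = if j = j' then (κB : ℂ) else 0) (i : ι) (j : ι') :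
    (((GA i)ᴴ ⊗ₖ (GB j)ᴴ) * blochSum GA GB TA TB TAB).trace = κA * κB * TAB i j := by
  simp [trace_kronecker_mul_blochSum, trace_conjTranspose, hGAtr, hGBtr, hGAorth, hGBorth]
  ring

end BlochRepresentation

section Separable
variable {m n ι ι' K : Type*} [Fintype m] [Fintype n] [Fintype ι] [Fintype ι'] [Fintype K]

theorem trace_kronecker_mul_sum_smul_kronecker (w : K → ℂ) (σ : K → Matrix m m ℂ)
    (τ : K → Matrix n n ℂ) (X : Matrix m m ℂ) (Y : Matrix n n ℂ) :
    ((X ⊗ₖ Y) * ∑ k, w k • (σ k ⊗ₖ τ k)).trace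
      = ∑ k, w k * ((X * σ k).trace * (Y * τ k).trace) := by
  simp only [Matrix.mul_sum, trace_sum, Matrix.mul_smul, trace_smul, smul_eq_mul,
    ← mul_kronecker_mul, trace_kronecker]

variable [DecidableEq m] [DecidableEq n] [Nonempty m] [Nonempty n] {κA κB : ℝ}
  {GA : ι → Matrix m m ℂ} {GB : ι' → Matrix n n ℂ} {TA : ι → ℂ} {TB : ι' → ℂ}
  {TAB : Matrix ι ι' ℂ} {w : K → ℂ} {σ : K → Matrix m m ℂ} {τ : K → Matrix n n ℂ}

theorem sum_mul_blochVec_left_eq [DecidableEq ι] (hκA : κA ≠ 0)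
    (hGAtr : ∀ i, (GA i).trace = 0)
    (hGAorth : ∀ i i', ((GA i)ᴴ * GA i').trace = if i = i' then (κA : ℂ) else 0)
    (hGBtr : ∀ j, (GB j).trace = 0)
    (hρ : ((Fintype.card m : ℂ) * Fintype.card n)⁻¹ • blochSum GA GB TA TB TAB
      = ∑ k, w k • (σ k ⊗ₖ τ k))
    (hτtr : ∀ k, (τ k).trace = 1) (i : ι) :
    ∑ k, w k * blochVec κA GA (σ k) i = TA i := by
  have h := congrArg (fun ρ => (((GA i)ᴴ ⊗ₖ (1 : Matrix n n ℂ)) * ρ).trace) hρ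
  simp only [Matrix.mul_smul, trace_smul, smul_eq_mul,
    trace_conjTranspose_kronecker_one_mul_blochSum TA TB TAB hGAtr hGAorth hGBtr,
    trace_kronecker_mul_sum_smul_kronecker, Matrix.one_mul, hτtr, mul_one] at h
  have : (κA : ℂ) ≠ 0 := Complex.ofReal_ne_zero.mpr hκA
  simp only [blochVec, mul_left_comm (w _), ← Finset.mul_sum, ← h]
  push_cast
  field_simp

theorem sum_mul_blochVec_right_eq [DecidableEq ι'] (hκB : κB ≠ 0)
    (hGAtr : ∀ i, (GA i).trace = 0) (hGBtr : ∀ j, (GB j).trace = 0)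
    (hGBorth : ∀ j j', ((GB j)ᴴ * GB j').trace = if j = j' then (κB : ℂ) else 0)
    (hρ : ((Fintype.card m : ℂ) * Fintype.card n)⁻¹ • blochSum GA GB TA TB TAB
      = ∑ k, w k • (σ k ⊗ₖ τ k))
    (hσtr : ∀ k, (σ k).trace = 1) (j : ι') :
    ∑ k, w k * blochVec κB GB (τ k) j = TB j := by
  have h := congrArg (fun ρ => (((1 : Matrix m m ℂ) ⊗ₖ (GB j)ᴴ) * ρ).trace) hρ
  simp only [Matrix.mul_smul, trace_smul, smul_eq_mul,
    trace_one_kronecker_conjTranspose_mul_blochSum TA TB TAB hGAtr hGBtr hGBorth,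
    trace_kronecker_mul_sum_smul_kronecker, hσtr, one_mul] at h
  have : (κB : ℂ) ≠ 0 := Complex.ofReal_ne_zero.mpr hκB
  simp only [blochVec, mul_left_comm (w _), ← Finset.mul_sum, ← h]
  push_cast
  field_simp

theorem sum_mul_blochVec_mul_blochVec_eq [DecidableEq ι] [DecidableEq ι'] (hκA : κA ≠ 0)
    (hκB : κB ≠ 0) (hGAtr : ∀ i, (GA i).trace = 0)
    (hGAorth : ∀ i i', ((GA i)ᴴ * GA i').trace = if i = i' then (κA : ℂ) else 0)
    (hGBtr : ∀ j, (GB j).trace = 0)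
    (hGBorth : ∀ j j', ((GB j)ᴴ * GB j').trace = if j = j' then (κB : ℂ) else 0)
    (hρ : ((Fintype.card m : ℂ) * Fintype.card n)⁻¹ • blochSum GA GB TA TB TAB
      = ∑ k, w k • (σ k ⊗ₖ τ k)) (i : ι) (j : ι') :
    ∑ k, w k * (blochVec κA GA (σ k) i * blochVec κB GB (τ k) j) = TAB i j := by
  have h := congrArg (fun ρ => (((GA i)ᴴ ⊗ₖ (GB j)ᴴ) * ρ).trace) hρ
  simp only [Matrix.mul_smul, trace_smul, smul_eq_mul,
    trace_conjTranspose_kronecker_conjTranspose_mul_blochSum TA TB TAB hGAtr hGAorth hGBtr hGBorth,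
    trace_kronecker_mul_sum_smul_kronecker] at h
  have : (κA : ℂ) ≠ 0 := Complex.ofReal_ne_zero.mpr hκA
  have : (κB : ℂ) ≠ 0 := Complex.ofReal_ne_zero.mpr hκB
  calc ∑ k, w k * (blochVec κA GA (σ k) i * blochVec κB GB (τ k) j)
      = ((Fintype.card m / κA : ℝ) : ℂ) * ((Fintype.card n / κB : ℝ) : ℂ)
          * ∑ k, w k * (((GA i)ᴴ * σ k).trace * ((GB j)ᴴ * τ k).trace) := by
        simp only [blochVec, Finset.mul_sum]
        exact Finset.sum_congr rfl fun _ _ => by ring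
    _ = TAB i j := by
        rw [← h]
        push_cast
        field_simp

end Separable

theorem stmt_5_general
    (dA dB : ℕ) (hdA : 1 ≤ dA) (hdB : 1 ≤ dB)
    (κA κB : ℝ) (hκA : 0 < κA) (hκB : 0 < κB)
    (GA : Fin (dA ^ 2 - 1) → Matrix (Fin dA) (Fin dA) ℂ)
    (GB : Fin (dB ^ 2 - 1) → Matrix (Fin dB) (Fin dB) ℂ)
    (hGAtr : ∀ i, (GA i).trace = 0)
    (hGAorth : ∀ i j, ((GA i)ᴴ * GA j).trace = if i = j then (κA : ℂ) else 0)
    (hGBtr : ∀ i, (GB i).trace = 0)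
    (hGBorth : ∀ i j, ((GB i)ᴴ * GB j).trace = if i = j then (κB : ℂ) else 0)
    (ρ : Matrix (Fin dA × Fin dB) (Fin dA × Fin dB) ℂ)
    (TA : Fin (dA ^ 2 - 1) → ℂ) (TB : Fin (dB ^ 2 - 1) → ℂ)
    (TAB : Matrix (Fin (dA ^ 2 - 1)) (Fin (dB ^ 2 - 1)) ℂ)
    (hrep : ρ = (((dA : ℂ) * dB))⁻¹ •
      ((1 : Matrix (Fin dA) (Fin dA) ℂ) ⊗ₖ (1 : Matrix (Fin dB) (Fin dB) ℂ)
        + ∑ i, TA i • (GA i ⊗ₖ (1 : Matrix (Fin dB) (Fin dB) ℂ))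
        + ∑ j, TB j • ((1 : Matrix (Fin dA) (Fin dA) ℂ) ⊗ₖ GB j)
        + ∑ i, ∑ j, TAB i j • (GA i ⊗ₖ GB j)))
    (hsep : ∃ (M : ℕ) (w : Fin M → ℝ)
        (σ : Fin M → Matrix (Fin dA) (Fin dA) ℂ)
        (τ : Fin M → Matrix (Fin dB) (Fin dB) ℂ),
      (∀ i, 0 ≤ w i) ∧ (∑ i, w i = 1) ∧
      (∀ i, (σ i).PosSemidef ∧ (σ i).trace = 1 ∧ σ i * σ i = σ i) ∧
      (∀ i, (τ i).PosSemidef ∧ (τ i).trace = 1 ∧ τ i * τ i = τ i) ∧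
      ρ = ∑ i, (w i : ℂ) • (σ i ⊗ₖ τ i))
    :
    ∀ (l : ℕ), 1 ≤ l → ∀ (x y : ℝ),
      traceNorm (Matrix.fromBlocks
          (Matrix.of fun (_ : Fin l) (_ : Fin l) => ((x * y : ℝ) : ℂ))
          (Matrix.of fun (_ : Fin l) (j : Fin (dB ^ 2 - 1)) => ((x : ℝ) : ℂ) * TB j)
          (Matrix.of fun (i : Fin (dA ^ 2 - 1)) (_ : Fin l) => ((y : ℝ) : ℂ) * TA i)
          TAB)
        ≤ Real.sqrt ((l * x ^ 2 + ((dA : ℝ) ^ 2 - dA) / κA) *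
            (l * y ^ 2 + ((dB : ℝ) ^ 2 - dB) / κB)) := by
  intro l _ x y
  obtain ⟨M, w, σ, τ, hw, hw1, hσ, hτ, hdecomp⟩ := hsep
  have : NeZero dA := ⟨by omega⟩
  have : NeZero dB := ⟨by omega⟩
  have hρ : ((Fintype.card (Fin dA) : ℂ) * Fintype.card (Fin dB))⁻¹ • blochSum GA GB TA TB TAB
      = ∑ k, (w k : ℂ) • (σ k ⊗ₖ τ k) := by
    rw [Fintype.card_fin, Fintype.card_fin]
    exact hrep.symm.trans hdecomp
  have hS := fromBlocks_eq_sum_smul_vecMulVec (L := Fin l)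
    (by exact_mod_cast hw1 : ∑ k, (w k : ℂ) = 1)
    (sum_mul_blochVec_left_eq hκA.ne' hGAtr hGAorth hGBtr hρ fun k => (hτ k).2.1)
    (sum_mul_blochVec_right_eq hκB.ne' hGAtr hGBtr hGBorth hρ fun k => (hσ k).2.1)
    (sum_mul_blochVec_mul_blochVec_eq hκA.ne' hκB.ne' hGAtr hGAorth hGBtr hGBorth hρ) x y
  have hdA_le_sq : (dA : ℝ) ≤ dA ^ 2 := by exact_mod_cast Nat.le_self_pow two_ne_zero dA
  rw [Complex.ofReal_mul, hS, Real.sqrt_mul (by positivity)]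
  refine (traceNorm_sum_smul_vecMulVec_le hw _ _).trans ?_
  calc _ ≤ ∑ k, w k * (√(Fintype.card (Fin l) * x ^ 2 + ((dA : ℝ) ^ 2 - dA) / κA)
          * √(Fintype.card (Fin l) * y ^ 2 + ((dB : ℝ) ^ 2 - dB) / κB)) := by
        gcongr with k
        · exact hw k
        · simpa using norm_toLp_sumElim_const_blochVec_le (L := Fin l) x hκA hGAtr hGAorth
            (hσ k).1.1 (hσ k).2.1 (hσ k).2.2
        · simpa using norm_toLp_sumElim_const_blochVec_le (L := Fin l) y hκB hGBtr hGBorth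
            (hτ k).1.1 (hτ k).2.1 (hτ k).2.2
    _ = _ := by rw [Fintype.card_fin, ← Finset.sum_mul, hw1, one_mul]

/-- (Unified form of Shen–Li–Duan's and Chang–Cui–Zhang–Fei's criteria.)
If the bipartite state `ρ` is separable, then for every `l ≥ 1` and reals `x, y` the block
matrix `[[xy E_{l×l}, x 𝟙_l (T^{(B)})ᵀ], [y T^{(A)} 𝟙_lᵀ, T^{(AB)}]]` has trace norm at
most `√((l x² + (d_A²−d_A)/κ_A)·(l y² + (d_B²−d_B)/κ_B))`. -/
theorem stmt_5
    (dA dB : ℕ) (hdA : 1 ≤ dA) (hdB : 1 ≤ dB)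
    (κA κB : ℝ) (hκA : 0 < κA) (hκB : 0 < κB)
    (GA : Fin (dA ^ 2 - 1) → Matrix (Fin dA) (Fin dA) ℂ)
    (GB : Fin (dB ^ 2 - 1) → Matrix (Fin dB) (Fin dB) ℂ)
    (hGAtr : ∀ i, (GA i).trace = 0)
    (hGAorth : ∀ i j, ((GA i)ᴴ * GA j).trace = if i = j then (κA : ℂ) else 0)
    (hGBtr : ∀ i, (GB i).trace = 0)
    (hGBorth : ∀ i j, ((GB i)ᴴ * GB j).trace = if i = j then (κB : ℂ) else 0)
    (ρ : Matrix (Fin dA × Fin dB) (Fin dA × Fin dB) ℂ)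
    (hρ : ρ.PosSemidef) (hρtr : ρ.trace = 1)
    (TA : Fin (dA ^ 2 - 1) → ℂ) (TB : Fin (dB ^ 2 - 1) → ℂ)
    (TAB : Matrix (Fin (dA ^ 2 - 1)) (Fin (dB ^ 2 - 1)) ℂ)
    (hrep : ρ = (((dA : ℂ) * dB))⁻¹ •
      ((1 : Matrix (Fin dA) (Fin dA) ℂ) ⊗ₖ (1 : Matrix (Fin dB) (Fin dB) ℂ)
        + ∑ i, TA i • (GA i ⊗ₖ (1 : Matrix (Fin dB) (Fin dB) ℂ))
        + ∑ j, TB j • ((1 : Matrix (Fin dA) (Fin dA) ℂ) ⊗ₖ GB j)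
        + ∑ i, ∑ j, TAB i j • (GA i ⊗ₖ GB j)))
    (hsep : ∃ (M : ℕ) (w : Fin M → ℝ)
        (σ : Fin M → Matrix (Fin dA) (Fin dA) ℂ)
        (τ : Fin M → Matrix (Fin dB) (Fin dB) ℂ),
      (∀ i, 0 ≤ w i) ∧ (∑ i, w i = 1) ∧
      (∀ i, (σ i).PosSemidef ∧ (σ i).trace = 1 ∧ σ i * σ i = σ i) ∧
      (∀ i, (τ i).PosSemidef ∧ (τ i).trace = 1 ∧ τ i * τ i = τ i) ∧
      ρ = ∑ i, (w i : ℂ) • (σ i ⊗ₖ τ i))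
    :
    ∀ (l : ℕ), 1 ≤ l → ∀ (x y : ℝ),
      traceNorm (Matrix.fromBlocks
          (Matrix.of fun (_ : Fin l) (_ : Fin l) => ((x * y : ℝ) : ℂ))
          (Matrix.of fun (_ : Fin l) (j : Fin (dB ^ 2 - 1)) => ((x : ℝ) : ℂ) * TB j)
          (Matrix.of fun (i : Fin (dA ^ 2 - 1)) (_ : Fin l) => ((y : ℝ) : ℂ) * TA i)
          TAB)
        ≤ Real.sqrt ((l * x ^ 2 + ((dA : ℝ) ^ 2 - dA) / κA) *
            (l * y ^ 2 + ((dB : ℝ) ^ 2 - dB) / κB)) :=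
  stmt_5_general dA dB hdA hdB κA κB hκA hκB GA GB hGAtr hGAorth hGBtr hGBorth ρ TA TB TAB hrep hsep
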